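/- Tarski's undefinability theorem (abstract diagonal form): Let T be a theory of sentences with a provability-closed notion ⊢, and let g be a map assigning codes to sentences. Suppose there is a 'truth predicate' TRUE such that T ⊢ TRUE(g(φ)) ↔ φ for all sentences φ, and T admits a diagonal/fixed-point operation producing for each formula ψ(x) a sentence δ with T ⊢ δ ↔ ψ(g(δ)). Then T is inconsistent; that is, no consistent T can have both a truth predicate and the diagonal property. -/
import Mathlib


/-- Tarski's undefinability theorem, abstract diagonal form: no consistent
theory (closed under modus ponens and basic propositional logic) can have both
a truth predicate and the diagonal/fixed-point property. -/
theorem tarski_undefinability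
    (Sent Code : Type*)
    (prov : Sent → Prop) (neg : Sent → Sent) (imp : Sent → Sent → Sent)
    (g : Sent → Code)
    -- closure under modus ponens:
    (hmp : ∀ a b, prov (imp a b) → prov a → prov b)
    -- closure under basic propositional (classical) rules:
    (hraa₁ : ∀ a, prov (imp a (neg a)) → prov (neg a))
    (hraa₂ : ∀ a, prov (imp (neg a) a) → prov a) :
    ¬ ((¬ ∃ φ, prov φ ∧ prov (neg φ)) ∧
       -- truth predicate: T ⊢ TRUE(g φ) ↔ φ for all sentences φ
       (∃ TRUE : Code → Sent, ∀ φ,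
          prov (imp (TRUE (g φ)) φ) ∧ prov (imp φ (TRUE (g φ)))) ∧
       -- diagonal property: each formula ψ(x) has a fixed point δ
       (∀ ψ : Code → Sent, ∃ δ,
          prov (imp δ (ψ (g δ))) ∧ prov (imp (ψ (g δ)) δ))) := by
  classical
  rintro ⟨hcon, ⟨TRUE, htrue⟩, hdiag⟩
  -- Key combinatorial consequence of the diagonal property: some g-fiber is
  -- provably equivalent to every sentence.
  have key : ∃ δ₀ : Sent, ∀ v : Sent, ∃ δ : Sent,
      g δ = g δ₀ ∧ prov (imp δ v) ∧ prov (imp v δ) := by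
    by_contra h
    push_neg at h
    -- h : ∀ δ₀, ∃ v, ∀ δ, g δ = g δ₀ → ¬ (prov (imp δ v) ∧ prov (imp v δ))
    choose v hv using h
    obtain ⟨δ, hδ1, hδ2⟩ :=
      hdiag (fun c => if h : ∃ δ₀, g δ₀ = c then v h.choose else TRUE c)
    have hex : ∃ δ₀, g δ₀ = g δ := ⟨δ, rfl⟩
    simp only [dif_pos hex] at hδ1 hδ2
    have hgd : g δ = g hex.choose := hex.choose_spec.symm
    exact hv hex.choose δ hgd hδ1 hδ2
  obtain ⟨δ₀, hF⟩ := key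
  set a := TRUE (g δ₀) with ha_def
  -- seed: the truth axiom `imp a δ₀` is provable
  have seed : prov (imp a δ₀) := (htrue δ₀).1
  obtain ⟨δp, hgp, hp1, hp2⟩ := hF (imp a δ₀)
  have hδp : prov δp := hmp _ _ hp2 seed
  have ha : prov a := by
    have h2 := (htrue δp).2
    rw [hgp] at h2
    exact hmp _ _ h2 hδp
  have all : ∀ v : Sent, prov v := by
    intro v
    obtain ⟨δv, hgv, h1, h2⟩ := hF v
    have h3 := (htrue δv).1
    rw [hgv] at h3
    exact hmp _ _ h1 (hmp _ _ h3 ha)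
  exact hcon ⟨a, all a, all (neg a)⟩
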